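/- Let Γ be a finite connected graph, let G ≤ Aut Γ be vertex-transitive and locally primitive on Γ, and let N be a normal subgroup of G having at least three orbits on the vertex set of Γ. Then N is semiregular on the vertices of Γ (i.e., N_α = 1 for every vertex α), and moreover for every vertex α, any two distinct neighbors of α lie in distinct N-orbits. -/

import Mathlib

/-!
Since `N` is normal in `G`, the trace on `Γ(α)` of an `N`-orbit is a block of `G_α`. By local
primitivity, either distinct neighbours of `α` lie in distinct `N`-orbits, or `Γ(α)` lies in a single
`N`-orbit; in the second case vertex-transitivity puts every neighbourhood in a single orbit, and by
connectivity the orbits of the two ends of one edge then cover `V`, contradicting the three orbits.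
Semiregularity follows: an element of `N` fixing a vertex maps each neighbour to a neighbour in
the same `N`-orbit, hence fixes it, and by connectivity it fixes every vertex.
-/

/-- The automorphism group of a simple graph acts on its vertices. -/
instance graphAutMulAction {V : Type*} {Γ : SimpleGraph V} : MulAction (Γ ≃g Γ) V where
  smul g v := g v
  one_smul _ := rfl
  mul_smul _ _ _ := rfl

/-- The stabilizer of a vertex acts on the neighbor set of that vertex. -/
instance stabilizerNeighborAction {V : Type*} {Γ : SimpleGraph V} {G : Subgroup (Γ ≃g Γ)}
    {α : V} : MulAction (MulAction.stabilizer G α) (Γ.neighborSet α) where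
  smul g v := ⟨(g.1.1 : Γ ≃g Γ) v.1, by
    have h : (g.1.1 : Γ ≃g Γ) α = α := g.2
    have hv : Γ.Adj α v.1 := v.2
    have : Γ.Adj ((g.1.1 : Γ ≃g Γ) α) ((g.1.1 : Γ ≃g Γ) v.1) :=
      (g.1.1 : Γ ≃g Γ).map_adj_iff.mpr hv
    rwa [h] at this⟩
  one_smul _ := Subtype.ext rfl
  mul_smul _ _ _ := Subtype.ext rfl

/-- A (pre)primitive action: transitive and with only trivial blocks. -/
def IsPrimitiveMulAction (G X : Type*) [Group G] [MulAction G X] : Prop :=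
  MulAction.IsPretransitive G X ∧
    ∀ B : Set X, MulAction.IsBlock G B → B.Subsingleton ∨ B = Set.univ

namespace SimpleGraph

variable {V : Type*} {Γ : SimpleGraph V}

theorem Reachable.mem_of_adj_closed {S : Set V} (hS : ∀ ⦃x y⦄, Γ.Adj x y → x ∈ S → y ∈ S)
    {u v : V} (h : Γ.Reachable u v) (hu : u ∈ S) : v ∈ S := by
  obtain ⟨p⟩ := h
  induction p with
  | nil => exact hu
  | cons hxy _ ih => exact ih (hS hxy hu)

end SimpleGraph

theorem MulAction.card_orbitRel_quotient_le_two {M X : Type*} [Group M] [MulAction M X] {a b : X}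
    (h : ∀ x, x ∈ orbit M a ∨ x ∈ orbit M b) : Nat.card (orbitRel.Quotient M X) ≤ 2 := by
  have hsurj : Function.Surjective
      ![(⟦a⟧ : orbitRel.Quotient M X), (⟦b⟧ : orbitRel.Quotient M X)] := by
    rintro ⟨x⟩
    rcases h x with hx | hx
    · exact ⟨0, (Quotient.sound (orbitRel_apply.2 hx)).symm⟩
    · exact ⟨1, (Quotient.sound (orbitRel_apply.2 hx)).symm⟩
  simpa using Nat.card_le_card_of_surjective _ hsurj

namespace NormalQuotient

open MulAction

variable {V : Type*} {Γ : SimpleGraph V} {G : Subgroup (Γ ≃g Γ)} {N : Subgroup G}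

theorem smul_adj (g : G) {u v : V} (h : Γ.Adj u v) : Γ.Adj (g • u) (g • v) :=
  (g.1 : Γ ≃g Γ).map_adj_iff.2 h

theorem eq_one_of_forall_smul_eq (n : N) (h : ∀ v : V, n • v = v) : n = 1 :=
  Subtype.ext <| Subtype.ext <| RelIso.ext h

def neighborSetValₑ (α : V) :
    Γ.neighborSet α →ₑ[((↑) : stabilizer G α → G)] V where
  toFun := (↑)
  map_smul' _ _ := rfl

theorem isBlock_preimage_orbit [N.Normal] (α u : V) :
    IsBlock (stabilizer G α) (((↑) : Γ.neighborSet α → V) ⁻¹' orbit N u) :=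
  (IsBlock.orbit_of_normal u).preimage (neighborSetValₑ α)

theorem neighborSet_subset_orbit_or_eq_of_mem_orbit [N.Normal] {α u : V}
    (hprim : IsPrimitiveMulAction (stabilizer G α) (Γ.neighborSet α)) (hu : Γ.Adj α u) :
    Γ.neighborSet α ⊆ orbit N u ∨ ∀ v, Γ.Adj α v → v ∈ orbit N u → v = u := by
  rcases hprim.2 _ (isBlock_preimage_orbit (G := G) (N := N) α u) with hsub | huniv
  · exact .inr fun v hv hvu ↦ congrArg Subtype.val
      (hsub (x := ⟨v, hv⟩) (y := ⟨u, hu⟩) hvu (mem_orbit_self u))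
  · exact .inl fun v hv ↦ (Set.eq_univ_iff_forall.1 huniv ⟨v, hv⟩ :)

theorem neighborSet_smul_subset_orbit [N.Normal] {α u : V}
    (h : Γ.neighborSet α ⊆ orbit N u) (g : G) :
    Γ.neighborSet (g • α) ⊆ orbit N (g • u) := by
  intro w hw
  rw [← smul_orbit_eq_orbit_smul, ← smul_inv_smul g w]
  refine Set.smul_mem_smul_set (h ?_)
  simpa using smul_adj g⁻¹ hw

theorem mem_orbit_of_adj_of_mem_orbit
    (hsame : ∀ ⦃x y y' : V⦄, Γ.Adj x y → Γ.Adj x y' → y ∈ orbit N y')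
    {z z' x y : V} (hz : Γ.Adj z z') (hx : x ∈ orbit N z) (hxy : Γ.Adj x y) :
    y ∈ orbit N z' := by
  obtain ⟨n, rfl⟩ := hx
  rw [← orbit_smul n z']
  exact hsame hxy (smul_adj (n : G) hz)

theorem mem_orbit_of_adj_of_adj [N.Normal] (hvert : ∀ u v : V, ∃ g ∈ G, g • u = v) {α u : V}
    (hsub : Γ.neighborSet α ⊆ orbit N u) ⦃x y y' : V⦄ (hy : Γ.Adj x y) (hy' : Γ.Adj x y') :
    y ∈ orbit N y' := by
  obtain ⟨g, hg, rfl⟩ := hvert α x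
  have h := neighborSet_smul_subset_orbit hsub ⟨g, hg⟩
  rw [orbit_eq_iff.2 (h hy')]
  exact h hy

theorem mem_orbit_or_mem_orbit_of_neighborSet_subset [N.Normal] (hconn : Γ.Preconnected)
    (hvert : ∀ u v : V, ∃ g ∈ G, g • u = v) {α u : V} (hu : Γ.Adj α u)
    (hsub : Γ.neighborSet α ⊆ orbit N u) (w : V) : w ∈ orbit N α ∨ w ∈ orbit N u := by
  have hsame := mem_orbit_of_adj_of_adj hvert hsub
  refine (hconn α w).mem_of_adj_closed (S := orbit N α ∪ orbit N u) ?_ (.inl (mem_orbit_self α))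
  rintro x y hxy (hx | hx)
  · exact .inr (mem_orbit_of_adj_of_mem_orbit hsame hu hx hxy)
  · exact .inl (mem_orbit_of_adj_of_mem_orbit hsame hu.symm hx hxy)

theorem orbit_ne_of_adj_of_adj [N.Normal] (hconn : Γ.Preconnected)
    (hvert : ∀ u v : V, ∃ g ∈ G, g • u = v)
    (hprim : ∀ α : V, IsPrimitiveMulAction (stabilizer G α) (Γ.neighborSet α))
    (horbits : 3 ≤ Nat.card (orbitRel.Quotient N V)) {α u v : V}
    (hu : Γ.Adj α u) (hv : Γ.Adj α v) (huv : u ≠ v) : orbit N u ≠ orbit N v := by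
  intro horb
  rcases neighborSet_subset_orbit_or_eq_of_mem_orbit (N := N) (hprim α) hu with hsub | hinj
  · have := card_orbitRel_quotient_le_two
      (mem_orbit_or_mem_orbit_of_neighborSet_subset hconn hvert hu hsub)
    omega
  · exact huv (hinj v hv (horb ▸ mem_orbit_self v)).symm

theorem eq_one_of_smul_eq_self (hconn : Γ.Preconnected)
    (horbit : ∀ α u v : V, Γ.Adj α u → Γ.Adj α v → u ≠ v → orbit N u ≠ orbit N v)
    {n : N} {v : V} (hv : n • v = v) : n = 1 := by
  refine eq_one_of_forall_smul_eq n fun w ↦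
    (hconn v w).mem_of_adj_closed (S := {x | n • x = x}) ?_ hv
  intro x y hxy hx
  by_contra hy
  have hadj : Γ.Adj x (n • y) := by
    have h := smul_adj (n : G) hxy
    rwa [← Subgroup.smul_def, ← Subgroup.smul_def, hx] at h
  exact horbit x y (n • y) hxy hadj (Ne.symm hy) (orbit_smul n y).symm

end NormalQuotient

theorem normal_quotient_semiregular
    {V : Type*} (Γ : SimpleGraph V)
    (hconn : Γ.Connected)
    (G : Subgroup (Γ ≃g Γ))
    (hvert : ∀ u v : V, ∃ g ∈ G, g • u = v)
    (hprim : ∀ α : V,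
      IsPrimitiveMulAction (MulAction.stabilizer G α) (Γ.neighborSet α))
    (N : Subgroup G) (hnorm : N.Normal)
    (horbits : 3 ≤ Nat.card (MulAction.orbitRel.Quotient N V)) :
    (∀ (n : N) (v : V), n • v = v → n = 1) ∧
    (∀ α u v : V, Γ.Adj α u → Γ.Adj α v → u ≠ v →
      MulAction.orbit N u ≠ MulAction.orbit N v) := by
  have horbit : ∀ α u v : V, Γ.Adj α u → Γ.Adj α v → u ≠ v →
      MulAction.orbit N u ≠ MulAction.orbit N v :=
    fun _ _ _ ↦ NormalQuotient.orbit_ne_of_adj_of_adj hconn.preconnected hvert hprim horbits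
  exact ⟨fun _ _ ↦ NormalQuotient.eq_one_of_smul_eq_self hconn.preconnected horbit, horbit⟩
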